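/- arXiv:2409.06064 — 3 statements merged into one kernel-verified Lean document; each statement's English description precedes it below -/
import Mathlib

section
/- Let X be a compact Hausdorff space and f : X → X continuous. Let 𝒥 be an idempotent ultrafilter on ℤ₊ and define f* : X → X by f*(v) = 𝒥-lim_n f^n(v) (the limit of the iterates along 𝒥, which exists and is unique by compactness and Hausdorffness). Then f* is idempotent: f*(f*(v)) = f*(v) for all v ∈ X. -/
/-- Existence of deep equilibria: the 𝒥-limit of iterates along an idempotent
ultrafilter is an idempotent transformation. -/
theorem deep_equilibrium_idempotent {X : Type*} [TopologicalSpace X]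
    [CompactSpace X] [T2Space X] {f : X → X} (hf : Continuous f)
    {J : Ultrafilter ℕ+}
    (hJ : ∀ S : Set ℕ+, S ∈ J ↔ {n : ℕ+ | {m : ℕ+ | m + n ∈ S} ∈ J} ∈ J)
    (fstar : X → X)
    (hstar : ∀ v : X, ∀ N : Set X, IsOpen N → fstar v ∈ N →
      {n : ℕ+ | f^[(n : ℕ)] v ∈ N} ∈ J) :
    ∀ v : X, fstar (fstar v) = fstar v := by
  intro v
  have h1 : Filter.Tendsto (fun n : ℕ+ => f^[(n : ℕ)] v) J (nhds (fstar v)) := by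
    rw [tendsto_nhds]
    intro N hN hmem
    exact hstar v N hN hmem
  have h2 : Filter.Tendsto (fun n : ℕ+ => f^[(n : ℕ)] v) J (nhds (fstar (fstar v))) := by
    rw [tendsto_nhds]
    intro N hN hmem
    -- Use idempotence of J
    rw [Ultrafilter.mem_coe, hJ]
    have key : {n : ℕ+ | f^[(n : ℕ)] (fstar v) ∈ N} ⊆
        {n : ℕ+ | {m : ℕ+ | m + n ∈ {k : ℕ+ | f^[(k : ℕ)] v ∈ N}} ∈ J} := by
      intro n hn
      have hopen : IsOpen (f^[(n : ℕ)] ⁻¹' N) := (hf.iterate _).isOpen_preimage N hN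
      have := hstar v _ hopen hn
      refine J.sets_of_superset this ?_
      intro m hm
      simp only [Set.mem_setOf_eq] at hm ⊢
      rw [PNat.add_coe, add_comm (m : ℕ) (n : ℕ), Function.iterate_add_apply]
      exact hm
    exact J.sets_of_superset (hstar (fstar v) N hN hmem) key
  exact tendsto_nhds_unique h2 h1
end

section
/- Let X be a compact Hausdorff space and F ⊆ C(X, ℝ) a family of continuous functions uniformly bounded by M. Suppose f̄ : X → ℝ is a pointwise cluster point of F (i.e., f̄ lies in the closure of F in ℝ^X with the product topology). If f̄ is continuous, then the double-limit exchange holds: for any sequence (f_i) in F and sequence (v_j) in X, and any ultrafilters 𝒰, 𝒱 on ℕ, if all relevant iterated ultralimits are taken, then 𝒰-lim_i 𝒱-lim_j f_i(v_j) = 𝒱-lim_j 𝒰-lim_i f_i(v_j) whenever 𝒰-lim_i f_i = f̄ pointwise. -/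
open Filter Topology

/- Let x₀ be the 𝒱-limit of (v_j), which exists by compactness. Continuity of each f_i gives
𝒱-lim_j f_i(v_j) = f_i(x₀), whose 𝒰-limit is f̄(x₀); pointwise convergence gives
𝒰-lim_i f_i(v_j) = f̄(v_j), and continuity of f̄ turns its 𝒱-limit into f̄(x₀) as well. -/

theorem eq_of_tendsto_comp_of_continuousAt {α X Y : Type*} [TopologicalSpace X]
    [TopologicalSpace Y] [T2Space Y] {l : Filter α} [l.NeBot] {v : α → X} {x : X}
    {g : X → Y} {y : Y} (hv : Tendsto v l (𝓝 x)) (hg : ContinuousAt g x)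
    (hgv : Tendsto (g ∘ v) l (𝓝 y)) : y = g x :=
  tendsto_nhds_unique hgv (hg.tendsto.comp hv)

theorem continuous_cluster_point_limit_exchange_general {X : Type*} [TopologicalSpace X]
    [CompactSpace X]
    (f : ℕ → X → ℝ) (hfc : ∀ i, Continuous (f i))
    (fbar : X → ℝ) (hfbarc : Continuous fbar)
    (U V : Ultrafilter ℕ) (v : ℕ → X)
    (hU : ∀ x : X, Tendsto (fun i => f i x) U (nhds (fbar x)))
    (L₁ : ℕ → ℝ) (hL₁ : ∀ i, Tendsto (fun j => f i (v j)) V (nhds (L₁ i)))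
    (a : ℝ) (ha : Tendsto L₁ U (nhds a))
    (L₂ : ℕ → ℝ) (hL₂ : ∀ j, Tendsto (fun i => f i (v j)) U (nhds (L₂ j)))
    (b : ℝ) (hb : Tendsto L₂ V (nhds b)) :
    a = b := by
  set x₀ := (V.map v).lim
  have hv : Tendsto v V (𝓝 x₀) := (V.map v).le_nhds_lim
  have hL₁_eq : L₁ = fun i => f i x₀ :=
    funext fun i => eq_of_tendsto_comp_of_continuousAt hv (hfc i).continuousAt (hL₁ i)
  have hL₂_eq : L₂ = fbar ∘ v := funext fun j => tendsto_nhds_unique (hL₂ j) (hU (v j))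
  have ha_eq : a = fbar x₀ := tendsto_nhds_unique ha (hL₁_eq ▸ hU x₀)
  have hb_eq : b = fbar x₀ :=
    eq_of_tendsto_comp_of_continuousAt hv hfbarc.continuousAt (hL₂_eq ▸ hb)
  rw [ha_eq, hb_eq]

/-- One direction of Grothendieck's criterion: a continuous pointwise cluster
point of a uniformly bounded family of continuous functions satisfies the
double-limit exchange property. -/
theorem continuous_cluster_point_limit_exchange {X : Type*} [TopologicalSpace X]
    [CompactSpace X] [T2Space X]
    (M : ℝ) (f : ℕ → X → ℝ) (hfc : ∀ i, Continuous (f i))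
    (hfb : ∀ i v, |f i v| ≤ M)
    (fbar : X → ℝ) (hfbarc : Continuous fbar)
    (U V : Ultrafilter ℕ) (v : ℕ → X)
    (hU : ∀ x : X, Tendsto (fun i => f i x) U (nhds (fbar x)))
    (L₁ : ℕ → ℝ) (hL₁ : ∀ i, Tendsto (fun j => f i (v j)) V (nhds (L₁ i)))
    (a : ℝ) (ha : Tendsto L₁ U (nhds a))
    (L₂ : ℕ → ℝ) (hL₂ : ∀ j, Tendsto (fun i => f i (v j)) U (nhds (L₂ j)))
    (b : ℝ) (hb : Tendsto L₂ V (nhds b)) :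
    a = b :=
  continuous_cluster_point_limit_exchange_general f hfc fbar hfbarc U V v hU L₁ hL₁ a ha L₂ hL₂ b hb
end

section
/- Let X be a nonempty compact Hausdorff space, f : X → X continuous, and for m ≥ 1 let F_m be the topological closure in X^X (with the product topology) of {f^{mn} : n ≥ 1}. Then the intersection ⋂_{m ≥ 1} F_m is nonempty. -/
/-- The closures F_m of the cyclic semigroups generated by the iterates f^m
have nonempty intersection in the compact space X^X. -/
theorem closures_of_iterate_semigroups_nonempty_inter {X : Type*} [Nonempty X]
    [TopologicalSpace X] [CompactSpace X] [T2Space X]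
    {f : X → X} (hf : Continuous f) :
    (⋂ m : ℕ+, closure {g : X → X | ∃ n : ℕ+, g = f^[(m : ℕ) * (n : ℕ)]}).Nonempty := by
  have hsub : ∀ m m' : ℕ+, (m : ℕ) ∣ (m' : ℕ) →
      closure {g : X → X | ∃ n : ℕ+, g = f^[(m' : ℕ) * (n : ℕ)]} ⊆
      closure {g : X → X | ∃ n : ℕ+, g = f^[(m : ℕ) * (n : ℕ)]} := by
    intro m m' ⟨c, hc⟩
    apply closure_mono
    rintro g ⟨n, rfl⟩
    refine ⟨⟨c * n, ?_⟩, ?_⟩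
    · have : 0 < (m' : ℕ) := m'.pos
      have hc0 : 0 < c := by
        rcases Nat.eq_zero_or_pos c with h | h
        · simp [h] at hc
        · exact h
      exact Nat.mul_pos hc0 n.pos
    · simp [hc, mul_assoc]
  apply IsCompact.nonempty_iInter_of_directed_nonempty_isCompact_isClosed
  · intro m m'
    exact ⟨m * m', hsub m (m * m') ⟨m', by push_cast; ring⟩,
      hsub m' (m * m') ⟨m, by push_cast; ring⟩⟩
  · intro m
    exact ⟨f^[(m : ℕ) * 1], subset_closure ⟨1, rfl⟩⟩
  · intro m
    exact (isClosed_closure).isCompact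
  · intro m
    exact isClosed_closure
end
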